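/- arXiv:1704.08053 — 5 statements merged into one kernel-verified Lean document; each statement's English description precedes it below -/
import Mathlib

section
/- Let (Ω, 𝓕, P) be a probability space, let X and Y be nonnegative random variables, and let F : [0,∞) → [0,∞) be a moderate function. Suppose β > 1 and δ, ε, γ, η > 0 are constants with γε < 1 such that F(βλ) ≤ γF(λ) and F(δ⁻¹λ) ≤ ηF(λ) for all λ > 0, and such that P[X > βλ and Y < δλ] ≤ ε · P[X > λ] for all λ > 0. Then E[F(X)] ≤ (γη/(1 − γε)) · E[F(Y)]. -/
/-!
Write `Φ(Z) = E[F(Z)] = ∫₀^∞ P[F(Z) > t] dt` (layer cake). A level `t > 0` reached by `F` is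
reached at a largest point `λ > 0`, by continuity and monotonicity, and then
`{F(X/β) > t} ⊆ {X > βλ}`. Splitting this event along `{Y < δλ}` and applying the good-λ
hypothesis at `λ` gives `P[F(X/β) > t] ≤ ε P[F(X) > t] + P[F(Y/δ) ≥ t]`; integrating in `t`
and using the growth bounds on `F`,
`Φ(X) ≤ γ Φ(X/β) ≤ γε Φ(X) + γη Φ(Y)`,
so `Φ(X)` can be absorbed into the left side as soon as it is finite. Finiteness is arranged by
truncating `X` at level `n`, which preserves the good-λ hypothesis, and monotone convergence
in `n`.
-/

open MeasureTheory

/-- A function `F : [0,∞) → [0,∞)` is *moderate* if it is continuous, nondecreasing,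
vanishes exactly at `0`, and satisfies a doubling condition `F(2x) ≤ c F(x)`. -/
def Moderate (F : ℝ → ℝ) : Prop :=
  ContinuousOn F (Set.Ici 0) ∧ MonotoneOn F (Set.Ici 0) ∧
  (∀ x ∈ Set.Ici (0 : ℝ), 0 ≤ F x) ∧ (∀ x ∈ Set.Ici (0 : ℝ), (F x = 0 ↔ x = 0)) ∧
  ∃ c > 0, ∀ x > (0 : ℝ), F (2 * x) ≤ c * F x

open Set ENNReal

def GoodLambda {Ω : Type*} [MeasurableSpace Ω] (P : Measure Ω) (X Y : Ω → ℝ) (β δ ε : ℝ) :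
    Prop :=
  ∀ l > (0 : ℝ), P {ω | β * l < X ω ∧ Y ω < δ * l} ≤ ENNReal.ofReal ε * P {ω | l < X ω}

theorem ContinuousOn.measurable_comp_of_forall_mem {α β γ : Type*} [MeasurableSpace α]
    [TopologicalSpace β] [MeasurableSpace β] [OpensMeasurableSpace β]
    [TopologicalSpace γ] [MeasurableSpace γ] [BorelSpace γ]
    {f : β → γ} {s : Set β} (hf : ContinuousOn f s) {g : α → β} (hg : Measurable g)
    (hgs : ∀ a, g a ∈ s) : Measurable fun a => f (g a) :=
  hf.domRestrict.measurable.comp (hg.subtype_mk (h := hgs))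

theorem ENNReal.le_ofReal_div_mul_of_le_add {a b : ℝ≥0∞} (ha : a ≠ ∞) {c d : ℝ} (hc₀ : 0 ≤ c)
    (hc₁ : c < 1) (h : a ≤ ENNReal.ofReal c * a + ENNReal.ofReal d * b) :
    a ≤ ENNReal.ofReal (d / (1 - c)) * b := by
  have h1c : 0 < 1 - c := sub_pos.2 hc₁
  have habsorb : a * ENNReal.ofReal (1 - c) ≤ ENNReal.ofReal d * b := by
    rw [ENNReal.ofReal_sub _ hc₀, ofReal_one, ENNReal.mul_sub fun _ _ => ha, mul_one,
      tsub_le_iff_left, mul_comm]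
    exact h
  rw [ENNReal.ofReal_div_of_pos h1c, div_eq_mul_inv, mul_right_comm, ← div_eq_mul_inv,
    ENNReal.le_div_iff_mul_le (Or.inl (by simpa using h1c)) (Or.inl ofReal_ne_top)]
  exact habsorb

section LevelSets

variable {F : ℝ → ℝ}

theorem exists_pos_eq_and_forall_gt_lt (hcont : ContinuousOn F (Ici 0))
    (hmono : MonotoneOn F (Ici 0)) (hF0 : F 0 = 0) {t x₀ : ℝ} (ht : 0 < t) (hx₀ : 0 ≤ x₀)
    (htx₀ : t < F x₀) : ∃ l > 0, F l = t ∧ ∀ x > l, t < F x := by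
  set S := Icc 0 x₀ ∩ F ⁻¹' {t}
  have hcont' : ContinuousOn F (Icc 0 x₀) := hcont.mono Icc_subset_Ici_self
  have hS : IsCompact S := isCompact_Icc.of_isClosed_subset
    (hcont'.preimage_isClosed_of_isClosed isClosed_Icc isClosed_singleton) inter_subset_left
  have hSne : S.Nonempty := by
    obtain ⟨l, hl, hFl⟩ := intermediate_value_Icc hx₀ hcont' ⟨by rw [hF0]; exact ht.le, htx₀.le⟩
    exact ⟨l, hl, hFl⟩
  obtain ⟨l, ⟨hl, hFl⟩, hlmax⟩ := hS.exists_isGreatest hSne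
  have hFl : F l = t := hFl
  have hl0 : 0 < l := hl.1.lt_of_ne fun h => ht.ne' (hFl ▸ h ▸ hF0)
  refine ⟨l, hl0, hFl, fun x hlx => ?_⟩
  have hx0 : 0 ≤ x := hl0.le.trans hlx.le
  refine (hFl ▸ hmono hl0.le hx0 hlx.le).lt_of_ne fun hFx => ?_
  rcases le_or_gt x x₀ with hxx₀ | hx₀x
  · exact hlx.not_ge (hlmax ⟨⟨hx0, hxx₀⟩, hFx.symm⟩)
  · exact htx₀.not_ge (hFx ▸ hmono hx₀ hx0 hx₀x.le)

theorem GoodLambda.measure_lt_comp_le {Ω : Type*} [MeasurableSpace Ω] {P : Measure Ω}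
    {X Y : Ω → ℝ} {β δ ε : ℝ} (h : GoodLambda P X Y β δ ε) (hX0 : ∀ ω, 0 ≤ X ω) (hβ : 0 < β)
    (hδ : 0 < δ) (hcont : ContinuousOn F (Ici 0)) (hmono : MonotoneOn F (Ici 0))
    (hF0 : F 0 = 0) {t : ℝ} (ht : 0 < t) :
    P {ω | t < F (β⁻¹ * X ω)} ≤
      ENNReal.ofReal ε * P {ω | t < F (X ω)} + P {ω | t ≤ F (δ⁻¹ * Y ω)} := by
  by_cases hreach : ∃ x₀ ≥ 0, t < F x₀
  swap
  · push Not at hreach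
    have hempty : {ω | t < F (β⁻¹ * X ω)} = ∅ :=
      eq_empty_of_forall_notMem fun ω hω => (hreach _ (by have := hX0 ω; positivity)).not_gt hω
    simp [hempty]
  obtain ⟨x₀, hx₀, htx₀⟩ := hreach
  obtain ⟨l, hl, hFl, hlt⟩ := exists_pos_eq_and_forall_gt_lt hcont hmono hF0 ht hx₀ htx₀
  have hXβ : {ω | t < F (β⁻¹ * X ω)} ⊆ {ω | β * l < X ω} := fun ω hω => by
    by_contra hle
    have hle : β⁻¹ * X ω ≤ l := by
      rw [inv_mul_le_iff₀ hβ]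
      exact not_lt.1 hle
    have hnonneg : 0 ≤ β⁻¹ * X ω := by have := hX0 ω; positivity
    exact (hmono hnonneg hl.le hle).not_gt (hFl ▸ hω)
  have hY : {ω | δ * l ≤ Y ω} ⊆ {ω | t ≤ F (δ⁻¹ * Y ω)} := fun ω hω => by
    have hle : l ≤ δ⁻¹ * Y ω := by
      rw [le_inv_mul_iff₀ hδ]
      exact hω
    exact hFl ▸ hmono hl.le (hl.le.trans hle) hle
  calc P {ω | t < F (β⁻¹ * X ω)}
      ≤ P ({ω | β * l < X ω ∧ Y ω < δ * l} ∪ {ω | δ * l ≤ Y ω}) :=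
        measure_mono fun ω hω => (lt_or_ge (Y ω) (δ * l)).imp (⟨hXβ hω, ·⟩) id
    _ ≤ P {ω | β * l < X ω ∧ Y ω < δ * l} + P {ω | δ * l ≤ Y ω} := measure_union_le _ _
    _ ≤ ENNReal.ofReal ε * P {ω | t < F (X ω)} + P {ω | t ≤ F (δ⁻¹ * Y ω)} :=
        add_le_add ((h l hl).trans (mul_le_mul_right (measure_mono fun ω hω => hlt _ hω) _))
          (measure_mono hY)

end LevelSets

section Integrals

variable {Ω : Type*} [MeasurableSpace Ω] {μ : Measure Ω}

theorem lintegral_ofReal_le_of_forall_measure_lt_le {f g h : Ω → ℝ} (hf₀ : 0 ≤ᵐ[μ] f)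
    (hg₀ : 0 ≤ᵐ[μ] g) (hh₀ : 0 ≤ᵐ[μ] h) (hf : AEMeasurable f μ) (hg : AEMeasurable g μ)
    (hh : AEMeasurable h μ) (c : ℝ≥0∞)
    (H : ∀ t > 0, μ {ω | t < f ω} ≤ c * μ {ω | t < g ω} + μ {ω | t ≤ h ω}) :
    ∫⁻ ω, ENNReal.ofReal (f ω) ∂μ ≤
      c * ∫⁻ ω, ENNReal.ofReal (g ω) ∂μ + ∫⁻ ω, ENNReal.ofReal (h ω) ∂μ := by
  have hanti : Measurable fun t : ℝ => μ {ω | t < g ω} :=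
    Antitone.measurable fun s u hsu => measure_mono fun ω hω => hsu.trans_lt hω
  rw [lintegral_eq_lintegral_meas_lt μ hf₀ hf, lintegral_eq_lintegral_meas_lt μ hg₀ hg,
    lintegral_eq_lintegral_meas_le μ hh₀ hh, ← lintegral_const_mul c hanti,
    ← lintegral_add_left (hanti.const_mul c)]
  exact setLIntegral_mono' measurableSet_Ioi H

variable {F : ℝ → ℝ}

theorem lintegral_ofReal_comp_mul_le (hF0 : F 0 = 0) {a c : ℝ} (hc : 0 ≤ c)
    (H : ∀ l > 0, F (a * l) ≤ c * F l) {Z : Ω → ℝ} (hZ : ∀ ω, 0 ≤ Z ω) :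
    ∫⁻ ω, ENNReal.ofReal (F (a * Z ω)) ∂μ ≤
      ENNReal.ofReal c * ∫⁻ ω, ENNReal.ofReal (F (Z ω)) ∂μ := by
  rw [← lintegral_const_mul' _ _ ofReal_ne_top]
  refine lintegral_mono fun ω => ?_
  rw [← ENNReal.ofReal_mul hc]
  refine ENNReal.ofReal_le_ofReal ?_
  rcases (hZ ω).eq_or_lt with h | h
  · simp [← h, hF0]
  · exact H _ h

theorem lintegral_ofReal_comp_min_ne_top [IsFiniteMeasure μ] (hmono : MonotoneOn F (Ici 0))
    {X : Ω → ℝ} (hX0 : ∀ ω, 0 ≤ X ω) {c : ℝ} (hc : 0 ≤ c) :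
    ∫⁻ ω, ENNReal.ofReal (F (min (X ω) c)) ∂μ ≠ ∞ := by
  refine ne_top_of_le_ne_top (b := ∫⁻ _, ENNReal.ofReal (F c) ∂μ) ?_
    (lintegral_mono fun ω => ENNReal.ofReal_le_ofReal ?_)
  · rw [lintegral_const]
    exact mul_ne_top ofReal_ne_top (measure_ne_top μ univ)
  · exact hmono (le_min (hX0 ω) hc) hc (min_le_right _ _)

theorem lintegral_ofReal_comp_eq_iSup_min (hcont : ContinuousOn F (Ici 0))
    (hmono : MonotoneOn F (Ici 0)) {X : Ω → ℝ} (hXm : Measurable X) (hX0 : ∀ ω, 0 ≤ X ω) :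
    ∫⁻ ω, ENNReal.ofReal (F (X ω)) ∂μ = ⨆ n : ℕ, ∫⁻ ω, ENNReal.ofReal (F (min (X ω) n)) ∂μ := by
  have hmin0 : ∀ (n : ℕ) ω, 0 ≤ min (X ω) n := fun n ω => le_min (hX0 ω) n.cast_nonneg
  rw [← lintegral_iSup (f := fun (n : ℕ) ω => ENNReal.ofReal (F (min (X ω) n)))
    (fun n => ENNReal.measurable_ofReal.comp
      (hcont.measurable_comp_of_forall_mem (hXm.min measurable_const) (hmin0 n)))
    (fun m n hmn ω => ENNReal.ofReal_le_ofReal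
      (hmono (hmin0 m ω) (hmin0 n ω) (min_le_min_left _ (Nat.cast_le.2 hmn))))]
  refine lintegral_congr fun ω => le_antisymm ?_
    (iSup_le fun n => ENNReal.ofReal_le_ofReal (hmono (hmin0 n ω) (hX0 ω) (min_le_left _ _)))
  obtain ⟨n, hn⟩ := exists_nat_ge (X ω)
  exact le_iSup_of_le n (by rw [min_eq_left hn])

end Integrals

theorem GoodLambda.min_const {Ω : Type*} [MeasurableSpace Ω] {P : Measure Ω} {X Y : Ω → ℝ}
    {β δ ε : ℝ} (h : GoodLambda P X Y β δ ε) (hβ : 1 ≤ β) (c : ℝ) :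
    GoodLambda P (fun ω => min (X ω) c) Y β δ ε := by
  intro l hl
  by_cases hlc : β * l < c
  · have hl_lt : l < c := (le_mul_of_one_le_left hl.le hβ).trans_lt hlc
    calc P {ω | β * l < min (X ω) c ∧ Y ω < δ * l}
        ≤ P {ω | β * l < X ω ∧ Y ω < δ * l} :=
          measure_mono fun ω hω => ⟨(lt_min_iff.1 hω.1).1, hω.2⟩
      _ ≤ ENNReal.ofReal ε * P {ω | l < X ω} := h l hl
      _ = ENNReal.ofReal ε * P {ω | l < min (X ω) c} := by simp [hl_lt]
  · have hempty : {ω | β * l < min (X ω) c ∧ Y ω < δ * l} = ∅ :=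
      eq_empty_of_forall_notMem fun ω hω => hlc (lt_min_iff.1 hω.1).2
    rw [hempty, measure_empty]
    exact zero_le

theorem GoodLambda.lintegral_le_of_ne_top {Ω : Type*} [MeasurableSpace Ω] {P : Measure Ω}
    {X Y : Ω → ℝ} {β δ ε γ η : ℝ} {F : ℝ → ℝ} (hgood : GoodLambda P X Y β δ ε)
    (hXm : Measurable X) (hYm : Measurable Y) (hX0 : ∀ ω, 0 ≤ X ω) (hY0 : ∀ ω, 0 ≤ Y ω)
    (hcont : ContinuousOn F (Ici 0)) (hmono : MonotoneOn F (Ici 0)) (hF0 : F 0 = 0)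
    (hβ : 0 < β) (hδ : 0 < δ) (hε : 0 ≤ ε) (hγ : 0 ≤ γ) (hη : 0 ≤ η) (hγε : γ * ε < 1)
    (hFβ : ∀ l > (0 : ℝ), F (β * l) ≤ γ * F l) (hFδ : ∀ l > (0 : ℝ), F (δ⁻¹ * l) ≤ η * F l)
    (hfin : ∫⁻ ω, ENNReal.ofReal (F (X ω)) ∂P ≠ ∞) :
    ∫⁻ ω, ENNReal.ofReal (F (X ω)) ∂P ≤
      ENNReal.ofReal (γ * η / (1 - γ * ε)) * ∫⁻ ω, ENNReal.ofReal (F (Y ω)) ∂P := by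
  have hnonneg : ∀ {Z : Ω → ℝ}, (∀ ω, 0 ≤ Z ω) → 0 ≤ᵐ[P] fun ω => F (Z ω) := fun hZ0 =>
    ae_of_all _ fun ω => hF0.symm.trans_le (hmono self_mem_Ici (hZ0 ω) (hZ0 ω))
  have hmeas : ∀ {Z : Ω → ℝ}, Measurable Z → (∀ ω, 0 ≤ Z ω) →
      AEMeasurable (fun ω => F (Z ω)) P := fun hZ hZ0 =>
    (hcont.measurable_comp_of_forall_mem hZ hZ0).aemeasurable
  have hX'0 : ∀ ω, 0 ≤ β⁻¹ * X ω := fun ω => by have := hX0 ω; positivity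
  have hY'0 : ∀ ω, 0 ≤ δ⁻¹ * Y ω := fun ω => by have := hY0 ω; positivity
  have hXβ : ∫⁻ ω, ENNReal.ofReal (F (X ω)) ∂P ≤
      ENNReal.ofReal γ * ∫⁻ ω, ENNReal.ofReal (F (β⁻¹ * X ω)) ∂P := by
    simpa only [mul_inv_cancel_left₀ hβ.ne'] using lintegral_ofReal_comp_mul_le hF0 hγ hFβ hX'0
  have hlayer : ∫⁻ ω, ENNReal.ofReal (F (β⁻¹ * X ω)) ∂P ≤
      ENNReal.ofReal ε * ∫⁻ ω, ENNReal.ofReal (F (X ω)) ∂P +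
        ∫⁻ ω, ENNReal.ofReal (F (δ⁻¹ * Y ω)) ∂P :=
    lintegral_ofReal_le_of_forall_measure_lt_le (hnonneg hX'0) (hnonneg hX0) (hnonneg hY'0)
      (hmeas (hXm.const_mul _) hX'0) (hmeas hXm hX0) (hmeas (hYm.const_mul _) hY'0) _
      fun t ht => hgood.measure_lt_comp_le hX0 hβ hδ hcont hmono hF0 ht
  have hYδ : ∫⁻ ω, ENNReal.ofReal (F (δ⁻¹ * Y ω)) ∂P ≤
      ENNReal.ofReal η * ∫⁻ ω, ENNReal.ofReal (F (Y ω)) ∂P :=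
    lintegral_ofReal_comp_mul_le hF0 hη hFδ hY0
  refine le_ofReal_div_mul_of_le_add hfin (by positivity) hγε ?_
  calc ∫⁻ ω, ENNReal.ofReal (F (X ω)) ∂P
      ≤ ENNReal.ofReal γ * (ENNReal.ofReal ε * ∫⁻ ω, ENNReal.ofReal (F (X ω)) ∂P +
          ENNReal.ofReal η * ∫⁻ ω, ENNReal.ofReal (F (Y ω)) ∂P) := by
        refine hXβ.trans ?_
        gcongr
        exact hlayer.trans (by gcongr)
    _ = ENNReal.ofReal (γ * ε) * ∫⁻ ω, ENNReal.ofReal (F (X ω)) ∂P +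
          ENNReal.ofReal (γ * η) * ∫⁻ ω, ENNReal.ofReal (F (Y ω)) ∂P := by
        rw [ENNReal.ofReal_mul hγ, ENNReal.ofReal_mul hγ, mul_add, mul_assoc, mul_assoc]

/-- Burkholder's good-λ inequality (Lemma 4.6 of the paper): if `X, Y ≥ 0`,
`F` is moderate, `β > 1`, `δ, ε, γ, η > 0` with `γε < 1`, `F(βλ) ≤ γ F(λ)`,
`F(δ⁻¹λ) ≤ η F(λ)`, and `P[X > βλ, Y < δλ] ≤ ε P[X > λ]` for all `λ > 0`,
then `E[F(X)] ≤ (γη/(1−γε)) E[F(Y)]`. -/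
theorem good_lambda_inequality
    {Ω : Type*} [MeasurableSpace Ω] (P : Measure Ω) [IsProbabilityMeasure P]
    (X Y : Ω → ℝ) (hXm : Measurable X) (hYm : Measurable Y)
    (hX0 : ∀ ω, 0 ≤ X ω) (hY0 : ∀ ω, 0 ≤ Y ω)
    (F : ℝ → ℝ) (hF : Moderate F)
    (β δ ε γ η : ℝ) (hβ : 1 < β) (hδ : 0 < δ) (hε : 0 < ε) (hγ : 0 < γ) (hη : 0 < η)
    (hγε : γ * ε < 1)
    (hFβ : ∀ l > (0 : ℝ), F (β * l) ≤ γ * F l)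
    (hFδ : ∀ l > (0 : ℝ), F (δ⁻¹ * l) ≤ η * F l)
    (hgood : ∀ l > (0 : ℝ),
      P {ω | β * l < X ω ∧ Y ω < δ * l} ≤ ENNReal.ofReal ε * P {ω | l < X ω}) :
    ∫⁻ ω, ENNReal.ofReal (F (X ω)) ∂P ≤
      ENNReal.ofReal (γ * η / (1 - γ * ε)) * ∫⁻ ω, ENNReal.ofReal (F (Y ω)) ∂P := by
  obtain ⟨hcont, hmono, -, hzero, -⟩ := hF
  have hF0 : F 0 = 0 := (hzero 0 self_mem_Ici).2 rfl
  have hgood : GoodLambda P X Y β δ ε := hgood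
  rw [lintegral_ofReal_comp_eq_iSup_min hcont hmono hXm hX0]
  exact iSup_le fun n => (hgood.min_const hβ.le n).lintegral_le_of_ne_top
    (hXm.min measurable_const) hYm (fun ω => le_min (hX0 ω) n.cast_nonneg) hY0 hcont hmono hF0
    (one_pos.trans hβ) hδ hε.le hγ.le hη.le hγε hFβ hFδ
    (lintegral_ofReal_comp_min_ne_top hmono hX0 n.cast_nonneg)
end

section
/- Let (E,d) be a metric space, p ≥ 1, and set R = 1 + 2^p + 3^{p−1}. Let T, S > 0, let τ : [0,T] → [0,S] be nondecreasing and right-continuous with τ(0) = 0 and τ(T) = S, let y : [0,S] → E be continuous, and define x := y ∘ τ : [0,T] → E. Call t ∈ (0,T] a jump time of τ if τ(t−) < τ(t), and for such t let γ_t denote the restriction of y to the interval [τ(t−), τ(t)]. Then max( ‖x‖_{p-var;[0,T]}^p , Σ_t ‖γ_t‖_{p-var;[τ(t−),τ(t)]}^p ) ≤ ‖y‖_{p-var;[0,S]}^p ≤ R·‖x‖_{p-var;[0,T]}^p + (R + 3^{p−1})·Σ_t ‖γ_t‖_{p-var;[τ(t−),τ(t)]}^p, where the sums range over the (at most countably many)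 jump times t of τ. -/
/-!
Partitions of `[0, T]` push forward under `τ` to partitions of `[0, S]`, and the jump intervals
`[τ(t-), τ(t)]` are ordered and pairwise non-overlapping, so superadditivity of `pVar` gives the
lower bound.

For the upper bound, every point `v` of a partition of `[0, S]` lies in the fibre `[τ(σ-), τ(σ)]`
of its first hitting time `σ = inf {u | v ≤ τ u}` (right-continuity gives `v ≤ τ σ`). Cut each
step `[s j, s (j+1)]` at `τ(σ j)` and `τ(σ (j+1) -)` whenever `σ j < σ (j+1)`; this costs the
factor `3^(p-1)`. The middle pieces are limits of increments of `y ∘ τ` over non-overlapping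
intervals, hence bounded by `‖y ∘ τ‖ₚ^p`, while the outer pieces are increments of partitions of
fibres, and a fibre is either a jump interval or a single point. As `3^(p-1) ≤ R`, the stated
constants follow.
-/

open scoped ENNReal

noncomputable def pVar {E : Type*} [PseudoMetricSpace E] (p : ℝ) (x : ℝ → E) (a b : ℝ) : ℝ≥0∞ :=
  ⨆ (n : ℕ) (t : Fin (n + 1) → ℝ) (_ : Monotone t) (_ : t 0 = a) (_ : t (Fin.last n) = b),
    ∑ i : Fin n, edist (x (t i.castSucc)) (x (t i.succ)) ^ p

open Finset Set Filter Topology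

section PVar

variable {E : Type*} [PseudoMetricSpace E] {p : ℝ} {x : ℝ → E} {a b c : ℝ}

noncomputable def partitionSum (p : ℝ) (x : ℝ → E) (t : ℕ → ℝ) (n : ℕ) : ℝ≥0∞ :=
  ∑ i ∈ range n, edist (x (t i)) (x (t (i + 1))) ^ p

/-- `(n, t)` encodes the partition `a = t 0 ≤ ⋯ ≤ t n = b`; the values of `t` beyond `n` only
pad it and are kept in `[a, b]`. -/
def intervalPartitions (a b : ℝ) : Set (ℕ × (ℕ → ℝ)) :=
  {q | Monotone q.2 ∧ q.2 0 = a ∧ q.2 q.1 = b ∧ ∀ i, q.2 i ∈ Icc a b}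

theorem pVar_eq_biSup (p : ℝ) (x : ℝ → E) (a b : ℝ) :
    pVar p x a b = ⨆ q ∈ intervalPartitions a b, partitionSum p x q.2 q.1 := by
  apply le_antisymm
  · refine iSup_le fun n => iSup_le fun t => iSup_le fun ht => iSup_le fun h0 =>
      iSup_le fun hn => ?_
    have hmem : (n, fun i => t (Fin.clamp i n)) ∈ intervalPartitions a b := by
      refine ⟨fun i j hij => ht (by simp [Fin.le_def]; omega), by simpa [Fin.clamp] using h0,
        by simp [Fin.clamp, ← hn]; rfl, fun i => ⟨?_, ?_⟩⟩
      · exact h0 ▸ ht (Fin.zero_le _)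
      · exact hn ▸ ht (Fin.le_last _)
    refine le_iSup₂_of_le _ hmem (le_of_eq ?_)
    rw [partitionSum, ← Fin.sum_univ_eq_sum_range]
    refine sum_congr rfl fun i _ => ?_
    congr 4 <;> ext <;> simp [Fin.clamp]
  · refine iSup₂_le fun ⟨n, t⟩ ⟨ht, h0, hn, _⟩ => ?_
    refine le_iSup_of_le n <| le_iSup_of_le (fun i => t i) <|
      le_iSup_of_le (fun i j hij => ht hij) <| le_iSup_of_le h0 <| le_iSup_of_le hn (le_of_eq ?_)
    rw [partitionSum, ← Fin.sum_univ_eq_sum_range]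
    rfl

theorem step_mem_intervalPartitions (hab : a ≤ b) :
    (1, fun i => if i = 0 then a else b) ∈ intervalPartitions a b := by
  refine ⟨fun i j hij => ?_, rfl, rfl, fun i => ?_⟩ <;> dsimp only <;> split_ifs <;> grind

theorem edist_rpow_le_pVar (hab : a ≤ b) : edist (x a) (x b) ^ p ≤ pVar p x a b := by
  rw [pVar_eq_biSup]
  exact le_iSup₂_of_le _ (step_mem_intervalPartitions hab) (by simp [partitionSum])

theorem pVar_add_pVar_le (hab : a ≤ b) (hbc : b ≤ c) :
    pVar p x a b + pVar p x b c ≤ pVar p x a c := by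
  simp only [pVar_eq_biSup]
  refine ENNReal.biSup_add_biSup_le' ⟨_, step_mem_intervalPartitions hab⟩
    ⟨_, step_mem_intervalPartitions hbc⟩
    fun ⟨n, s⟩ ⟨hs, hs0, hsn, hsI⟩ ⟨m, u⟩ ⟨hu, hu0, hum, huI⟩ => ?_
  dsimp only at *
  set w : ℕ → ℝ := fun i => if i ≤ n then s i else u (i - n)
  have hw : ∀ i, w (n + i) = u i := fun i => by
    rcases i.eq_zero_or_pos with rfl | hi
    · simp [w, hsn, hu0]
    · simp [w, show ¬ n + i ≤ n by omega]
  have hmem : (n + m, w) ∈ intervalPartitions a c := by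
    refine ⟨monotone_nat_of_le_succ fun i => ?_, by simp [w, hs0], by simp [hw, hum], fun i => ?_⟩
    · simp only [w]
      split_ifs with h1 h2
      · exact hs (by omega)
      · exact (hsI i).2.trans (huI _).1
      · omega
      · exact hu (by omega)
    · simp only [w]; split_ifs
      · exact ⟨(hsI i).1, (hsI i).2.trans hbc⟩
      · exact ⟨hab.trans (huI _).1, (huI _).2⟩
  refine le_iSup₂_of_le _ hmem (le_of_eq ?_)
  simp only [partitionSum, sum_range_add, add_assoc, hw]
  congr 1
  refine sum_congr rfl fun i hi => ?_
  simp only [Finset.mem_range] at hi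
  simp [w, show i ≤ n by omega, show i + 1 ≤ n by omega]

theorem pVar_mono {a' b' : ℝ} (ha : a ≤ a') (hab : a' ≤ b') (hb : b' ≤ b) :
    pVar p x a' b' ≤ pVar p x a b :=
  calc pVar p x a' b' ≤ pVar p x a a' + pVar p x a' b' := le_add_self
    _ ≤ pVar p x a b' := pVar_add_pVar_le ha hab
    _ ≤ pVar p x a b' + pVar p x b' b := le_self_add
    _ ≤ pVar p x a b := pVar_add_pVar_le (ha.trans hab) hb

theorem pVar_self (hp : 0 < p) (x : ℝ → E) (a : ℝ) : pVar p x a a = 0 := by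
  rw [pVar_eq_biSup]
  refine le_antisymm (iSup₂_le fun ⟨n, t⟩ ⟨_, _, _, ht⟩ => ?_) bot_le
  have hta : ∀ i, t i = a := fun i => le_antisymm (ht i).2 (ht i).1
  simp [partitionSum, hta, ENNReal.zero_rpow_of_pos hp]

theorem sum_pVar_le_pVar {ι : Type*} [LinearOrder ι] (F : Finset ι) {l r : ι → ℝ}
    (hmem : ∀ i ∈ F, a ≤ l i ∧ l i ≤ r i ∧ r i ≤ b)
    (hord : ∀ i ∈ F, ∀ j ∈ F, i < j → r i ≤ l j) :
    ∑ i ∈ F, pVar p x (l i) (r i) ≤ pVar p x a b := by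
  induction F using Finset.induction_on_max generalizing b with
  | empty => simp
  | insert m F hm ih =>
    obtain ⟨ham, hlr, hrb⟩ := hmem m (mem_insert_self m F)
    have hF : ∑ i ∈ F, pVar p x (l i) (r i) ≤ pVar p x a (l m) :=
      ih (fun i hi => ⟨(hmem i (mem_insert_of_mem hi)).1, (hmem i (mem_insert_of_mem hi)).2.1,
          hord i (mem_insert_of_mem hi) m (mem_insert_self m F) (hm i hi)⟩)
        fun i hi j hj => hord i (mem_insert_of_mem hi) j (mem_insert_of_mem hj)
    rw [sum_insert fun h => lt_irrefl m (hm m h), add_comm]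
    calc _ ≤ pVar p x a (l m) + pVar p x (l m) (r m) := by gcongr
      _ ≤ pVar p x a (r m) := pVar_add_pVar_le ham hlr
      _ ≤ pVar p x a b := pVar_mono le_rfl (ham.trans hlr) hrb

theorem tsum_pVar_le_pVar {ι : Type*} [LinearOrder ι] {l r : ι → ℝ}
    (hmem : ∀ i, a ≤ l i ∧ l i ≤ r i ∧ r i ≤ b) (hord : ∀ i j, i < j → r i ≤ l j) :
    ∑' i, pVar p x (l i) (r i) ≤ pVar p x a b := by
  rw [ENNReal.tsum_eq_iSup_sum]
  exact iSup_le fun F => sum_pVar_le_pVar F (fun i _ => hmem i) fun i _ j _ => hord i j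

theorem pVar_comp_le {y : ℝ → E} {τ : ℝ → ℝ} (hτ : MonotoneOn τ (Icc a b)) (hc : c ≤ τ a)
    (hd : τ b ≤ d) : pVar p (y ∘ τ) a b ≤ pVar p y c d := by
  rw [pVar_eq_biSup]
  refine iSup₂_le fun ⟨n, t⟩ ⟨ht, ht0, htn, htI⟩ => ?_
  dsimp only at *
  have hab : a ≤ b := ht0 ▸ htn ▸ ht (Nat.zero_le n)
  have hτt : (n, τ ∘ t) ∈ intervalPartitions (τ a) (τ b) :=
    ⟨fun i j hij => hτ (htI i) (htI j) (ht hij), by simp [ht0], by simp [htn],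
      fun i => ⟨hτ ⟨le_rfl, hab⟩ (htI i) (htI i).1, hτ (htI i) ⟨hab, le_rfl⟩ (htI i).2⟩⟩
  calc partitionSum p (y ∘ τ) t n = partitionSum p y (τ ∘ t) n := rfl
    _ ≤ pVar p y (τ a) (τ b) := by
      rw [pVar_eq_biSup]; exact le_iSup₂_of_le _ hτt le_rfl
    _ ≤ pVar p y c d := pVar_mono hc (hτ ⟨le_rfl, hab⟩ ⟨hab, le_rfl⟩ hab) hd

theorem sum_edist_leftLim_le_pVar {ι : Type*} [LinearOrder ι] (F : Finset ι) {l r : ι → ℝ}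
    {L : ι → E} (hmem : ∀ i ∈ F, a ≤ l i ∧ l i < r i ∧ r i ≤ b)
    (hord : ∀ i ∈ F, ∀ j ∈ F, i < j → r i ≤ l j)
    (hL : ∀ i ∈ F, Tendsto x (𝓝[<] r i) (𝓝 (L i))) :
    ∑ i ∈ F, edist (x (l i)) (L i) ^ p ≤ pVar p x a b := by
  have hlim : Tendsto (fun u : ι → ℝ => ∑ i ∈ F, edist (x (l i)) (x (u i)) ^ p)
      (Filter.pi fun i => 𝓝[<] r i) (𝓝 (∑ i ∈ F, edist (x (l i)) (L i) ^ p)) :=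
    tendsto_finsetSum F fun i hi => (ENNReal.continuous_rpow_const.tendsto _).comp <|
      tendsto_const_nhds.edist ((hL i hi).comp (tendsto_eval_pi _ i))
  have hev : ∀ᶠ u in Filter.pi (fun i => 𝓝[<] r i), ∀ i ∈ F, u i ∈ Ioo (l i) (r i) :=
    (eventually_all_finset F).2 fun i hi =>
      tendsto_eval_pi (fun i => 𝓝[<] r i) i (Ioo_mem_nhdsLT (hmem i hi).2.1)
  refine le_of_tendsto hlim (hev.mono fun u hu => ?_)
  calc ∑ i ∈ F, edist (x (l i)) (x (u i)) ^ p ≤ ∑ i ∈ F, pVar p x (l i) (u i) :=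
        sum_le_sum fun i hi => edist_rpow_le_pVar (hu i hi).1.le
    _ ≤ pVar p x a b := sum_pVar_le_pVar F
        (fun i hi => ⟨(hmem i hi).1, (hu i hi).1.le, (hu i hi).2.le.trans (hmem i hi).2.2⟩)
        fun i hi j hj hij => (hu i hi).2.le.trans (hord i hi j hj hij)

theorem sum_pVar_le_sum_pVar_fiber {κ ι : Type*} [LinearOrder κ] [DecidableEq ι] (F : Finset κ)
    (f : κ → ι) {l r : κ → ℝ} {L R : ι → ℝ}
    (hmem : ∀ k ∈ F, L (f k) ≤ l k ∧ l k ≤ r k ∧ r k ≤ R (f k))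
    (hord : ∀ i ∈ F, ∀ j ∈ F, i < j → r i ≤ l j) :
    ∑ k ∈ F, pVar p x (l k) (r k) ≤ ∑ v ∈ F.image f, pVar p x (L v) (R v) := by
  rw [← sum_fiberwise_of_maps_to fun k hk => mem_image_of_mem f hk]
  refine sum_le_sum fun v _ => sum_pVar_le_pVar _ (fun k hk => ?_) fun i hi j hj =>
    hord i (mem_filter.1 hi).1 j (mem_filter.1 hj).1
  obtain ⟨hkF, rfl⟩ := mem_filter.1 hk
  exact hmem k hkF

/-- The two outer pieces next to `s k` join to `[β (k-1), α k]`, which lies in the fibre of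
`t k`. -/
theorem sum_edist_rpow_outer_le_sum_pVar_fiber {ι : Type*} [DecidableEq ι] {s α β : ℕ → ℝ}
    {t : ℕ → ι} {L R : ι → ℝ} (n : ℕ) (hchain : ∀ j, s j ≤ α j ∧ α j ≤ β j ∧ β j ≤ s (j + 1))
    (hs0 : L (t 0) ≤ s 0) (hα : ∀ j, α j ≤ R (t j)) (hβ : ∀ j, L (t (j + 1)) ≤ β j) :
    ∑ j ∈ range n, (edist (x (s j)) (x (α j)) ^ p + edist (x (β j)) (x (s (j + 1))) ^ p) ≤
      ∑ v ∈ (range (n + 1)).image t, pVar p x (L v) (R v) := by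
  set l : ℕ → ℝ := fun k => if k = 0 then s 0 else β (k - 1)
  have hls : ∀ k, l k ≤ s k := fun k => by
    rcases k with _ | k
    · simp [l]
    · simpa [l] using (hchain k).2.2
  have hs : Monotone s := monotone_nat_of_le_succ fun j =>
    (hchain j).1.trans ((hchain j).2.1.trans (hchain j).2.2)
  have hord : ∀ i j, i < j → α i ≤ l j := fun i j hij => by
    obtain ⟨m, rfl⟩ : ∃ m, j = m + 1 := ⟨j - 1, by omega⟩
    simp only [l, Nat.add_one_ne_zero, if_false, Nat.add_sub_cancel]
    rcases (Nat.lt_succ_iff.1 hij).eq_or_lt with rfl | him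
    · exact (hchain i).2.1
    · exact (hchain i).2.1.trans <| (hchain i).2.2.trans <| (hs him).trans <|
        (hchain m).1.trans (hchain m).2.1
  calc ∑ j ∈ range n, (edist (x (s j)) (x (α j)) ^ p + edist (x (β j)) (x (s (j + 1))) ^ p)
      ≤ ∑ k ∈ range (n + 1), (edist (x (l k)) (x (s k)) ^ p + edist (x (s k)) (x (α k)) ^ p) := by
        rw [sum_add_distrib, sum_add_distrib, add_comm, sum_range_succ' (fun k => edist _ _ ^ p),
          sum_range_succ (fun k => edist (x (s k)) _ ^ p)]
        gcongr <;> simp [l]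
    _ ≤ ∑ k ∈ range (n + 1), pVar p x (l k) (α k) := sum_le_sum fun k _ =>
        (add_le_add (edist_rpow_le_pVar (hls k)) (edist_rpow_le_pVar (hchain k).1)).trans
          (pVar_add_pVar_le (hls k) (hchain k).1)
    _ ≤ _ := sum_pVar_le_sum_pVar_fiber _ t
        (fun k _ => ⟨?_, (hls k).trans (hchain k).1, hα k⟩) fun i _ j _ => hord i j
  rcases k with _ | k
  · simpa [l] using hs0
  · simpa [l] using hβ k

theorem edist_rpow_le_three_mul (hp : 1 ≤ p) (x y z w : E) :
    edist x w ^ p ≤ 3 ^ (p - 1) * (edist x y ^ p + edist y z ^ p + edist z w ^ p) := by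
  have h := ENNReal.rpow_sum_le_const_mul_sum_rpow (s := Finset.univ)
    (f := ![edist x y, edist y z, edist z w]) hp
  simp only [Fin.sum_univ_three, card_univ, Fintype.card_fin] at h
  calc edist x w ^ p ≤ (edist x y + edist y z + edist z w) ^ p :=
        ENNReal.rpow_le_rpow (edist_triangle4 x y z w) (zero_le_one.trans hp)
    _ ≤ _ := by simpa using h

theorem partitionSum_le_three_mul {ι : Type*} [LinearOrder ι] (hp : 1 ≤ p) {s : ℕ → ℝ}
    {t : ℕ → ι} {L R : ι → ℝ} (n : ℕ) (hs : Monotone s) (ht : Monotone t)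
    (hfib : ∀ j, L (t j) ≤ s j ∧ s j ≤ R (t j))
    (hord : ∀ j, t j < t (j + 1) → R (t j) ≤ L (t (j + 1))) :
    partitionSum p x s n ≤ 3 ^ (p - 1) *
      (∑ j ∈ (range n).filter (fun j => t j < t (j + 1)),
          edist (x (R (t j))) (x (L (t (j + 1)))) ^ p +
        ∑ v ∈ (range (n + 1)).image t, pVar p x (L v) (R v)) := by
  classical
  have hflat : ∀ j, ¬ t j < t (j + 1) → t (j + 1) = t j := fun j h =>
    le_antisymm (not_lt.1 h) (ht j.le_succ)
  set α : ℕ → ℝ := fun j => if t j < t (j + 1) then R (t j) else s (j + 1)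
  set β : ℕ → ℝ := fun j => if t j < t (j + 1) then L (t (j + 1)) else s (j + 1)
  have hchain : ∀ j, s j ≤ α j ∧ α j ≤ β j ∧ β j ≤ s (j + 1) := fun j => by
    by_cases h : t j < t (j + 1)
    · simpa [α, β, h] using ⟨(hfib j).2, hord j h, (hfib (j + 1)).1⟩
    · simpa [α, β, h] using hs j.le_succ
  have hα : ∀ j, α j ≤ R (t j) := fun j => by
    by_cases h : t j < t (j + 1)
    · simp [α, h]
    · simpa [α, h, hflat j h] using (hfib (j + 1)).2
  have hβ : ∀ j, L (t (j + 1)) ≤ β j := fun j => by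
    by_cases h : t j < t (j + 1)
    · simp [β, h]
    · simpa [β, h] using (hfib (j + 1)).1
  have hmid : ∑ j ∈ range n, edist (x (α j)) (x (β j)) ^ p =
      ∑ j ∈ (range n).filter (fun j => t j < t (j + 1)),
        edist (x (R (t j))) (x (L (t (j + 1)))) ^ p := by
    rw [sum_filter]
    refine sum_congr rfl fun j _ => ?_
    by_cases h : t j < t (j + 1)
    · simp [α, β, h]
    · simp [α, β, h, ENNReal.zero_rpow_of_pos (zero_lt_one.trans_le hp)]
  calc partitionSum p x s n
      ≤ ∑ j ∈ range n, 3 ^ (p - 1) * (edist (x (s j)) (x (α j)) ^ p +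
          edist (x (α j)) (x (β j)) ^ p + edist (x (β j)) (x (s (j + 1))) ^ p) :=
        sum_le_sum fun j _ => edist_rpow_le_three_mul hp _ _ _ _
    _ = 3 ^ (p - 1) * (∑ j ∈ range n, edist (x (α j)) (x (β j)) ^ p +
          ∑ j ∈ range n, (edist (x (s j)) (x (α j)) ^ p +
            edist (x (β j)) (x (s (j + 1))) ^ p)) := by
        rw [← mul_sum, ← sum_add_distrib]
        congr 1
        exact sum_congr rfl fun j _ => by ring
    _ ≤ _ := by
        rw [hmid]
        gcongr
        exact sum_edist_rpow_outer_le_sum_pVar_fiber n hchain (hfib 0).1 hα hβ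

end PVar

section TimeChange

variable {τ : ℝ → ℝ} {T u : ℝ}

theorem bddAbove_image_Ico (hτ : MonotoneOn τ (Icc 0 T)) (hu : u ≤ T) :
    BddAbove (τ '' Ico 0 u) := by
  rcases lt_or_ge u 0 with hu0 | hu0
  · simp [Ico_eq_empty_of_le hu0.le]
  · exact ⟨τ u, by
      rintro _ ⟨w, hw, rfl⟩
      exact hτ ⟨hw.1, hw.2.le.trans hu⟩ ⟨hu0, hu⟩ hw.2.le⟩

theorem le_sSup_image_Ico (hτ : MonotoneOn τ (Icc 0 T)) {v : ℝ} (hv : 0 ≤ v) (hvu : v < u)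
    (hu : u ≤ T) : τ v ≤ sSup (τ '' Ico 0 u) :=
  le_csSup (bddAbove_image_Ico hτ hu) ⟨v, ⟨hv, hvu⟩, rfl⟩

theorem sSup_image_Ico_le (hτ : MonotoneOn τ (Icc 0 T)) (hu : u ∈ Ioc 0 T) :
    sSup (τ '' Ico 0 u) ≤ τ u :=
  csSup_le ((Set.nonempty_Ico.2 hu.1).image τ) <| forall_mem_image.2 fun _ hw =>
    hτ ⟨hw.1, hw.2.le.trans hu.2⟩ ⟨hu.1.le, hu.2⟩ hw.2.le

theorem tendsto_sSup_image_Ico (hτ : MonotoneOn τ (Icc 0 T)) (hu : u ∈ Ioc 0 T) :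
    Tendsto τ (𝓝[<] u) (𝓝 (sSup (τ '' Ico 0 u))) := by
  refine tendsto_order.2 ⟨fun m hm => ?_, fun m hm => ?_⟩
  · obtain ⟨_, ⟨w, hw, rfl⟩, hmw⟩ := exists_lt_of_lt_csSup ((Set.nonempty_Ico.2 hu.1).image τ) hm
    filter_upwards [Ioo_mem_nhdsLT hw.2] with z hz
    exact hmw.trans_le (hτ ⟨hw.1, hw.2.le.trans hu.2⟩ ⟨hw.1.trans hz.1.le, hz.2.le.trans hu.2⟩
      hz.1.le)
  · filter_upwards [Ioo_mem_nhdsLT hu.1] with z hz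
    exact (le_csSup (bddAbove_image_Ico hτ hu.2) ⟨z, ⟨hz.1.le, hz.2⟩, rfl⟩).trans_lt hm

noncomputable def firstHit (τ : ℝ → ℝ) (T v : ℝ) : ℝ :=
  sInf {u | u ∈ Icc 0 T ∧ v ≤ τ u}

theorem firstHit_mem_Icc (hT : 0 ≤ T) {v : ℝ} (hv : v ≤ τ T) : firstHit τ T v ∈ Icc 0 T :=
  ⟨le_csInf ⟨T, ⟨hT, le_rfl⟩, hv⟩ fun _ hw => hw.1.1,
    csInf_le ⟨0, fun _ hw => hw.1.1⟩ ⟨⟨hT, le_rfl⟩, hv⟩⟩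

theorem firstHit_mono (hT : 0 ≤ T) {v w : ℝ} (hvw : v ≤ w) (hw : w ≤ τ T) :
    firstHit τ T v ≤ firstHit τ T w :=
  csInf_le_csInf ⟨0, fun _ h => h.1.1⟩ ⟨T, ⟨hT, le_rfl⟩, hw⟩ fun _ h => ⟨h.1, hvw.trans h.2⟩

theorem le_apply_firstHit (hτ : MonotoneOn τ (Icc 0 T))
    (hrc : ∀ t ∈ Ico 0 T, Tendsto τ (𝓝[>] t) (𝓝 (τ t))) (hT : 0 ≤ T) {v : ℝ} (hv : v ≤ τ T) :
    v ≤ τ (firstHit τ T v) := by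
  obtain ⟨h0, hT'⟩ := firstHit_mem_Icc hT hv
  rcases hT'.eq_or_lt with hTeq | hlt
  · rwa [hTeq]
  refine ge_of_tendsto (hrc _ ⟨h0, hlt⟩) ?_
  filter_upwards [Ioo_mem_nhdsGT hlt] with z hz
  obtain ⟨w, hw, hwz⟩ := exists_lt_of_csInf_lt (s := {u | u ∈ Icc 0 T ∧ v ≤ τ u})
    ⟨T, ⟨hT, le_rfl⟩, hv⟩ hz.1
  exact hw.2.trans (hτ hw.1 ⟨hw.1.1.trans hwz.le, hz.2.le⟩ hwz.le)

/-- When `firstHit τ T v = 0` the left side is the junk value `sSup ∅ = 0`. -/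
theorem sSup_image_Ico_firstHit_le (hT : 0 ≤ T) {v : ℝ} (hv0 : 0 ≤ v) (hv : v ≤ τ T) :
    sSup (τ '' Ico 0 (firstHit τ T v)) ≤ v := by
  refine Real.sSup_le ?_ hv0
  rintro _ ⟨w, hw, rfl⟩
  by_contra! hvw
  have hwT : w ≤ T := hw.2.le.trans (firstHit_mem_Icc hT hv).2
  have hle : firstHit τ T v ≤ w := csInf_le ⟨0, fun _ h => h.1.1⟩ ⟨⟨hw.1, hwT⟩, hvw.le⟩
  exact hle.not_gt hw.2

variable {E : Type*} [PseudoMetricSpace E] {p : ℝ} {y : ℝ → E}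

theorem tendsto_comp_sSup_image_Ico (hτ : MonotoneOn τ (Icc 0 T)) (hτ0 : τ 0 = 0)
    (hy : ContinuousOn y (Icc 0 (τ T))) (hu : u ∈ Ioc 0 T) :
    Tendsto (y ∘ τ) (𝓝[<] u) (𝓝 (y (sSup (τ '' Ico 0 u)))) := by
  have hT : (0 : ℝ) ∈ Icc 0 T := ⟨le_rfl, hu.1.le.trans hu.2⟩
  have hTT : T ∈ Icc 0 T := ⟨hT.2, le_rfl⟩
  have hmem : sSup (τ '' Ico 0 u) ∈ Icc 0 (τ T) :=
    ⟨hτ0.ge.trans (le_sSup_image_Ico hτ le_rfl hu.1 hu.2),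
      (sSup_image_Ico_le hτ hu).trans (hτ ⟨hu.1.le, hu.2⟩ hTT hu.2)⟩
  refine (hy _ hmem).tendsto.comp (tendsto_nhdsWithin_iff.2 ⟨tendsto_sSup_image_Ico hτ hu, ?_⟩)
  filter_upwards [Ioo_mem_nhdsLT hu.1] with z hz
  have hz' : z ∈ Icc 0 T := ⟨hz.1.le, hz.2.le.trans hu.2⟩
  exact ⟨hτ0.ge.trans (hτ hT hz' hz.1.le), hτ hz' hTT hz'.2⟩

theorem sum_edist_rpow_sSup_le_pVar_comp (hτ : MonotoneOn τ (Icc 0 T)) (hτ0 : τ 0 = 0)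
    (hy : ContinuousOn y (Icc 0 (τ T))) {t : ℕ → ℝ} (ht : Monotone t)
    (htI : ∀ j, t j ∈ Icc 0 T) (n : ℕ) :
    ∑ j ∈ (range n).filter (fun j => t j < t (j + 1)),
        edist (y (τ (t j))) (y (sSup (τ '' Ico 0 (t (j + 1))))) ^ p ≤
      pVar p (y ∘ τ) 0 T := by
  refine sum_edist_leftLim_le_pVar (x := y ∘ τ) _ (r := fun j => t (j + 1))
    (fun j hj => ⟨(htI j).1, (mem_filter.1 hj).2, (htI (j + 1)).2⟩)
    (fun i _ j _ hij => ht hij) fun j hj => ?_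
  exact tendsto_comp_sSup_image_Ico hτ hτ0 hy
    ⟨(htI j).1.trans_lt (mem_filter.1 hj).2, (htI (j + 1)).2⟩

/-- Off the jump set the summand vanishes: `sSup (τ '' Ico 0 v) = τ v`, at `v = 0` because
`sSup ∅ = 0 = τ 0`. -/
theorem sum_pVar_le_tsum_jumps (hp : 0 < p) (hτ : MonotoneOn τ (Icc 0 T)) (hτ0 : τ 0 = 0)
    (V : Finset ℝ) (hV : ∀ v ∈ V, v ∈ Icc 0 T) :
    ∑ v ∈ V, pVar p y (sSup (τ '' Ico 0 v)) (τ v) ≤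
      ∑' t : {t : ℝ | t ∈ Ioc 0 T ∧ sSup (τ '' Ico 0 t) < τ t},
        pVar p y (sSup (τ '' Ico 0 (t : ℝ))) (τ (t : ℝ)) := by
  rw [_root_.tsum_subtype _ fun t => pVar p y (sSup (τ '' Ico 0 t)) (τ t)]
  refine (sum_le_sum fun v hv => ?_).trans (ENNReal.sum_le_tsum V)
  by_cases hvJ : v ∈ {t : ℝ | t ∈ Ioc 0 T ∧ sSup (τ '' Ico 0 t) < τ t}
  · rw [indicator_of_mem hvJ]
  rw [indicator_of_notMem hvJ]
  suffices sSup (τ '' Ico 0 v) = τ v by rw [this, pVar_self hp]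
  rcases (hV v hv).1.eq_or_lt with rfl | hv0
  · simp [hτ0]
  · have hvI : v ∈ Ioc 0 T := ⟨hv0, (hV v hv).2⟩
    exact (sSup_image_Ico_le hτ hvI).antisymm (not_lt.1 fun h => hvJ ⟨hvI, h⟩)

theorem tsum_jumps_le_pVar (hτ : MonotoneOn τ (Icc 0 T)) (hτ0 : τ 0 = 0) :
    ∑' t : {t : ℝ | t ∈ Ioc 0 T ∧ sSup (τ '' Ico 0 t) < τ t},
        pVar p y (sSup (τ '' Ico 0 (t : ℝ))) (τ (t : ℝ)) ≤ pVar p y 0 (τ T) :=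
  tsum_pVar_le_pVar
    (fun t => ⟨hτ0.ge.trans (le_sSup_image_Ico hτ le_rfl t.2.1.1 t.2.1.2), t.2.2.le,
      hτ ⟨t.2.1.1.le, t.2.1.2⟩ ⟨t.2.1.1.le.trans t.2.1.2, le_rfl⟩ t.2.1.2⟩)
    fun t t' htt' => le_sSup_image_Ico hτ t.2.1.1.le htt' t'.2.1.2

theorem pVar_le_three_rpow_mul (hp : 1 ≤ p) (hT : 0 ≤ T) (hτ : MonotoneOn τ (Icc 0 T))
    (hrc : ∀ t ∈ Ico 0 T, Tendsto τ (𝓝[>] t) (𝓝 (τ t))) (hτ0 : τ 0 = 0)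
    (hy : ContinuousOn y (Icc 0 (τ T))) :
    pVar p y 0 (τ T) ≤ 3 ^ (p - 1) * (pVar p (y ∘ τ) 0 T +
      ∑' t : {t : ℝ | t ∈ Ioc 0 T ∧ sSup (τ '' Ico 0 t) < τ t},
        pVar p y (sSup (τ '' Ico 0 (t : ℝ))) (τ (t : ℝ))) := by
  rw [pVar_eq_biSup]
  refine iSup₂_le fun ⟨n, s⟩ ⟨hs, _, _, hsI⟩ => ?_
  set t : ℕ → ℝ := fun j => firstHit τ T (s j)
  have ht : Monotone t := fun i j hij => firstHit_mono hT (hs hij) (hsI j).2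
  have htI : ∀ j, t j ∈ Icc 0 T := fun j => firstHit_mem_Icc hT (hsI j).2
  refine (partitionSum_le_three_mul hp n hs ht (L := fun u => sSup (τ '' Ico 0 u)) (R := τ)
    (fun j => ⟨sSup_image_Ico_firstHit_le hT (hsI j).1 (hsI j).2,
      le_apply_firstHit hτ hrc hT (hsI j).2⟩)
    fun j hj => le_sSup_image_Ico hτ (htI j).1 hj (htI (j + 1)).2).trans ?_
  gcongr
  · exact sum_edist_rpow_sSup_le_pVar_comp hτ hτ0 hy ht htI n
  · exact sum_pVar_le_tsum_jumps (zero_lt_one.trans_le hp) hτ hτ0 _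
      fun v hv => by obtain ⟨j, -, rfl⟩ := mem_image.1 hv; exact htI j

end TimeChange

theorem pvar_jump_decomposition_general
    {E : Type*} [MetricSpace E] (p T S : ℝ) (hp : 1 ≤ p) (hT : 0 < T)
    (τ : ℝ → ℝ) (y : ℝ → E)
    (hτmono : MonotoneOn τ (Set.Icc 0 T))
    (hτrc : ∀ t ∈ Set.Ico 0 T, Filter.Tendsto τ (nhdsWithin t (Set.Ioi t)) (nhds (τ t)))
    (hτ0 : τ 0 = 0) (hτT : τ T = S)
    (hy : ContinuousOn y (Set.Icc 0 S)) :
    max (pVar p (y ∘ τ) 0 T)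
        (∑' t : {t : ℝ | t ∈ Set.Ioc 0 T ∧ sSup (τ '' Set.Ico 0 t) < τ t},
          pVar p y (sSup (τ '' Set.Ico 0 (t : ℝ))) (τ (t : ℝ)))
      ≤ pVar p y 0 S
    ∧ pVar p y 0 S
      ≤ ENNReal.ofReal (1 + (2 : ℝ) ^ p + (3 : ℝ) ^ (p - 1)) * pVar p (y ∘ τ) 0 T
        + ENNReal.ofReal ((1 + (2 : ℝ) ^ p + (3 : ℝ) ^ (p - 1)) + (3 : ℝ) ^ (p - 1)) *
          ∑' t : {t : ℝ | t ∈ Set.Ioc 0 T ∧ sSup (τ '' Set.Ico 0 t) < τ t},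
            pVar p y (sSup (τ '' Set.Ico 0 (t : ℝ))) (τ (t : ℝ)) := by
  subst hτT
  refine ⟨max_le (pVar_comp_le hτmono hτ0.ge le_rfl) (tsum_jumps_le_pVar hτmono hτ0),
    (pVar_le_three_rpow_mul hp hT.le hτmono hτrc hτ0 hy).trans ?_⟩
  have h3 : (3 : ℝ≥0∞) ^ (p - 1) = ENNReal.ofReal ((3 : ℝ) ^ (p - 1)) := by
    rw [← ENNReal.ofReal_rpow_of_pos three_pos, ENNReal.ofReal_ofNat]
  have h2p : 0 ≤ (2 : ℝ) ^ p := by positivity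
  have h3p : 0 ≤ (3 : ℝ) ^ (p - 1) := by positivity
  rw [mul_add, h3]
  gcongr <;> linarith

/-- Lemma 2.14 of the paper (intrinsic form, both bounds).  Let `τ : [0,T] → [0,S]` be
nondecreasing, right-continuous, with `τ 0 = 0`, `τ T = S`, let `y : [0,S] → E` be
continuous, and `x := y ∘ τ`.  Writing `τ(t−) = sSup (τ '' [0,t))` and letting the sums
range over the jump times of `τ`, with `R = 1 + 2^p + 3^(p-1)`:
`max(‖x‖ₚ^p, Σ_t ‖γ_t‖ₚ^p) ≤ ‖y‖ₚ^p ≤ R ‖x‖ₚ^p + (R + 3^(p-1)) Σ_t ‖γ_t‖ₚ^p`. -/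
theorem pvar_jump_decomposition
    {E : Type*} [MetricSpace E] (p T S : ℝ) (hp : 1 ≤ p) (hT : 0 < T) (hS : 0 < S)
    (τ : ℝ → ℝ) (y : ℝ → E)
    (hτmono : MonotoneOn τ (Set.Icc 0 T))
    (hτrc : ∀ t ∈ Set.Ico 0 T, Filter.Tendsto τ (nhdsWithin t (Set.Ioi t)) (nhds (τ t)))
    (hτ0 : τ 0 = 0) (hτT : τ T = S)
    (hy : ContinuousOn y (Set.Icc 0 S)) :
    max (pVar p (y ∘ τ) 0 T)
        (∑' t : {t : ℝ | t ∈ Set.Ioc 0 T ∧ sSup (τ '' Set.Ico 0 t) < τ t},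
          pVar p y (sSup (τ '' Set.Ico 0 (t : ℝ))) (τ (t : ℝ)))
      ≤ pVar p y 0 S
    ∧ pVar p y 0 S
      ≤ ENNReal.ofReal (1 + (2 : ℝ) ^ p + (3 : ℝ) ^ (p - 1)) * pVar p (y ∘ τ) 0 T
        + ENNReal.ofReal ((1 + (2 : ℝ) ^ p + (3 : ℝ) ^ (p - 1)) + (3 : ℝ) ^ (p - 1)) *
          ∑' t : {t : ℝ | t ∈ Set.Ioc 0 T ∧ sSup (τ '' Set.Ico 0 t) < τ t},
            pVar p y (sSup (τ '' Set.Ico 0 (t : ℝ))) (τ (t : ℝ)) :=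
  pvar_jump_decomposition_general p T S hp hT τ y hτmono hτrc hτ0 hτT hy
end

section
/- Let (E,d) be a metric space, T > 0, p > 0, and let x : [0,T] → E be càdlàg. For δ > 0 define recursively τ_0(δ) = 0 and, for j ≥ 1, τ_j(δ) = inf{ t ∈ [τ_{j−1}(δ), T] : sup_{u,v ∈ [τ_{j−1}(δ), t]} d(x_u, x_v) > δ }, with the convention inf ∅ = +∞, and let ν(δ) ∈ [0,∞] denote the number of indices j ≥ 1 with τ_j(δ) < ∞. Then ‖x‖_{p-var;[0,T]}^p ≤ Σ_{k=−∞}^{∞} 2^{p(k+1)} ν(2^k), where the sum is over all integers k and both sides are allowed to equal +∞. -/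
open scoped ENNReal Classical

/-- `x : [0,T] → E` is càdlàg: right-continuous on `[0,T)` with left limits on `(0,T]`. -/
def Cadlag {E : Type*} [MetricSpace E] (x : ℝ → E) (T : ℝ) : Prop :=
  (∀ t ∈ Set.Ico (0 : ℝ) T, Filter.Tendsto x (nhdsWithin t (Set.Ioi t)) (nhds (x t))) ∧
  (∀ t ∈ Set.Ioc (0 : ℝ) T, ∃ l : E, Filter.Tendsto x (nhdsWithin t (Set.Iio t)) (nhds l))

/-- The greedy sequence of oscillation times of `x` on `[0,T]` at scale `δ`:
`τ₀ = 0` and `τ_{j+1} = inf { t ∈ [τ_j, T] : sup_{u,v ∈ [τ_j, t]} d(x_u, x_v) > δ }`,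
with values in `[0,∞]` and the convention `inf ∅ = ∞`. -/
noncomputable def greedyTau {E : Type*} [MetricSpace E] (x : ℝ → E) (T δ : ℝ) : ℕ → ℝ≥0∞
  | 0 => 0
  | j + 1 =>
    sInf {s : ℝ≥0∞ | ∃ t : ℝ, 0 ≤ t ∧ t ≤ T ∧ greedyTau x T δ j ≤ ENNReal.ofReal t ∧
      s = ENNReal.ofReal t ∧
      ∃ u v : ℝ, 0 ≤ u ∧ 0 ≤ v ∧ greedyTau x T δ j ≤ ENNReal.ofReal u ∧ u ≤ t ∧
        greedyTau x T δ j ≤ ENNReal.ofReal v ∧ v ≤ t ∧ δ < dist (x u) (x v)}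

/-- `ν(δ)`: the number (in `[0,∞]`) of indices `j ≥ 1` with `τ_j(δ) < ∞`. -/
noncomputable def greedyNu {E : Type*} [MetricSpace E] (x : ℝ → E) (T δ : ℝ) : ℝ≥0∞ :=
  ∑' j : ℕ, if greedyTau x T δ (j + 1) < ⊤ then (1 : ℝ≥0∞) else 0

/-!
If a partition of `[0,T]` has `m` increments larger than `δ`, the greedy times at scale `δ`
are caught up by them one at a time: `τ_{j+1}` is at most the right endpoint of the `(j+1)`-th
large increment. Hence at most `ν(δ)` increments exceed `δ`. Sorting the increments `d` of a
partition into dyadic shells `2^k < d ≤ 2^(k+1)`, each contributes at most `2^(p(k+1))`, and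
the shell of index `k` holds at most `ν(2^k)` of them.
-/

open Finset

lemma two_zpow_add_one_rpow (p : ℝ) (k : ℤ) :
    ((2 : ℝ) ^ (k + 1)) ^ p = (2 : ℝ) ^ (p * ((k : ℝ) + 1)) := by
  rw [← Real.rpow_intCast, ← Real.rpow_mul zero_le_two]
  push_cast
  ring_nf

lemma ofReal_rpow_le_tsum_dyadic_shell {p d : ℝ} (hp : 0 < p) (hd : 0 ≤ d) :
    ENNReal.ofReal (d ^ p) ≤ ∑' k : ℤ, ENNReal.ofReal ((2 : ℝ) ^ (p * ((k : ℝ) + 1))) *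
      if d ∈ Set.Ioc ((2 : ℝ) ^ k) (2 ^ (k + 1)) then 1 else 0 := by
  rcases hd.eq_or_lt with rfl | hd
  · simp [Real.zero_rpow hp.ne']
  obtain ⟨k, hk⟩ := exists_mem_Ioc_zpow hd one_lt_two
  refine le_trans ?_ (ENNReal.le_tsum k)
  rw [if_pos hk, mul_one, ← two_zpow_add_one_rpow]
  exact ENNReal.ofReal_le_ofReal (Real.rpow_le_rpow hd.le hk.2 hp.le)

lemma sum_ofReal_rpow_le_tsum_dyadic {ι : Type*} [Fintype ι] {p : ℝ} (hp : 0 < p) (d : ι → ℝ)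
    (hd : ∀ i, 0 ≤ d i) :
    ∑ i, ENNReal.ofReal (d i ^ p) ≤ ∑' k : ℤ, ENNReal.ofReal ((2 : ℝ) ^ (p * ((k : ℝ) + 1))) *
      #{i | (2 : ℝ) ^ k < d i} :=
  calc ∑ i, ENNReal.ofReal (d i ^ p)
      ≤ ∑ i, ∑' k : ℤ, ENNReal.ofReal ((2 : ℝ) ^ (p * ((k : ℝ) + 1))) *
          if d i ∈ Set.Ioc ((2 : ℝ) ^ k) (2 ^ (k + 1)) then 1 else 0 :=
        sum_le_sum fun i _ => ofReal_rpow_le_tsum_dyadic_shell hp (hd i)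
    _ = ∑' k : ℤ, ENNReal.ofReal ((2 : ℝ) ^ (p * ((k : ℝ) + 1))) *
          #{i | d i ∈ Set.Ioc ((2 : ℝ) ^ k) (2 ^ (k + 1))} := by
        rw [← Summable.tsum_finsetSum fun _ _ => ENNReal.summable]
        simp only [← mul_sum, sum_boole]
    _ ≤ _ := by
        gcongr with k
        exact And.left

section Greedy

variable {E : Type*} [MetricSpace E] {x : ℝ → E} {T δ : ℝ}

lemma greedyTau_succ_le {j : ℕ} {u v : ℝ} (hu : 0 ≤ u) (huv : u ≤ v) (hvT : v ≤ T)
    (hτ : greedyTau x T δ j ≤ ENNReal.ofReal u) (hδ : δ < dist (x u) (x v)) :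
    greedyTau x T δ (j + 1) ≤ ENNReal.ofReal v := by
  have hτv := hτ.trans (ENNReal.ofReal_le_ofReal huv)
  exact sInf_le ⟨v, hu.trans huv, hvT, hτv, rfl, u, v, hu, hu.trans huv, hτ, huv, hτv, le_rfl, hδ⟩

lemma greedyTau_succ_le_of_chain {m : ℕ} {u v : Fin m → ℝ} (hu : ∀ j, 0 ≤ u j)
    (huv : ∀ j, u j ≤ v j) (hvT : ∀ j, v j ≤ T) (hvu : ∀ j j', j < j' → v j ≤ u j')
    (hδ : ∀ j, δ < dist (x (u j)) (x (v j))) (j : Fin m) :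
    greedyTau x T δ (j + 1) ≤ ENNReal.ofReal (v j) := by
  suffices h : ∀ (j : ℕ) (hj : j < m), greedyTau x T δ j ≤ ENNReal.ofReal (u ⟨j, hj⟩) from
    greedyTau_succ_le (hu j) (huv j) (hvT j) (h j j.2) (hδ j)
  intro j hj
  induction j with
  | zero => simp [greedyTau]
  | succ j ih =>
    have hj' : j < m := by omega
    exact (greedyTau_succ_le (hu _) (huv _) (hvT _) (ih hj') (hδ _)).trans
      (ENNReal.ofReal_le_ofReal (hvu _ _ (by simp [Fin.lt_def])))

lemma natCast_le_greedyNu {m : ℕ} (h : ∀ j < m, greedyTau x T δ (j + 1) < ⊤) :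
    (m : ℝ≥0∞) ≤ greedyNu x T δ :=
  calc (m : ℝ≥0∞) = ∑ j ∈ range m, if greedyTau x T δ (j + 1) < ⊤ then 1 else 0 := by
        rw [sum_ite_of_true fun j hj => h j (mem_range.1 hj)]
        simp
    _ ≤ greedyNu x T δ := ENNReal.sum_le_tsum _

lemma card_lt_dist_le_greedyNu {n : ℕ} {t : Fin (n + 1) → ℝ} (ht : Monotone t) (h0 : t 0 = 0)
    (hT : t (Fin.last n) = T) :
    (#{i : Fin n | δ < dist (x (t i.castSucc)) (x (t i.succ))} : ℝ≥0∞) ≤ greedyNu x T δ := by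
  set s : Finset (Fin n) := {i | δ < dist (x (t i.castSucc)) (x (t i.succ))}
  set e := s.orderEmbOfFin rfl
  refine natCast_le_greedyNu fun j hj => (greedyTau_succ_le_of_chain (j := ⟨j, hj⟩)
    (u := fun l => t (e l).castSucc) (v := fun l => t (e l).succ)
    (fun _ => h0 ▸ ht (Fin.zero_le _)) (fun _ => ht (Fin.castSucc_le_succ _))
    (fun _ => hT ▸ ht (Fin.le_last _))
    (fun _ _ hll' => ht (Fin.succ_le_castSucc_iff.2 (e.strictMono hll')))
    (fun l => (mem_filter.1 (s.orderEmbOfFin_mem rfl l)).2)).trans_lt ENNReal.ofReal_lt_top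

end Greedy

theorem pvar_le_dyadic_greedy_count_general
    {E : Type*} [MetricSpace E] (p T : ℝ) (hp : 0 < p)
    (x : ℝ → E) :
    pVar p x 0 T
      ≤ ∑' k : ℤ, ENNReal.ofReal ((2 : ℝ) ^ (p * ((k : ℝ) + 1))) *
          greedyNu x T ((2 : ℝ) ^ k) := by
  refine iSup_le fun n => iSup_le fun t => iSup_le fun ht => iSup_le fun h0 => iSup_le fun hT => ?_
  calc ∑ i : Fin n, edist (x (t i.castSucc)) (x (t i.succ)) ^ p
      = ∑ i : Fin n, ENNReal.ofReal (dist (x (t i.castSucc)) (x (t i.succ)) ^ p) := by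
        simp only [edist_dist, ENNReal.ofReal_rpow_of_nonneg dist_nonneg hp.le]
    _ ≤ _ := sum_ofReal_rpow_le_tsum_dyadic hp _ fun _ => dist_nonneg
    _ ≤ _ := by
        gcongr
        exact card_lt_dist_le_greedyNu ht h0 hT

/-- Estimate (4.2) in the proof of Lemma 4.3 of the paper:
for a càdlàg path `x` on `[0,T]`,
`‖x‖_{p-var;[0,T]}^p ≤ ∑_{k ∈ ℤ} 2^{p(k+1)} ν(2^k)`, both sides possibly `+∞`. -/
theorem pvar_le_dyadic_greedy_count
    {E : Type*} [MetricSpace E] (p T : ℝ) (hp : 0 < p) (hT : 0 < T)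
    (x : ℝ → E) (hx : Cadlag x T) :
    pVar p x 0 T
      ≤ ∑' k : ℤ, ENNReal.ofReal ((2 : ℝ) ^ (p * ((k : ℝ) + 1))) *
          greedyNu x T ((2 : ℝ) ^ k) :=
  pvar_le_dyadic_greedy_count_general p T hp x
end

section
/- Let 1 ≤ p < p', T > 0, and let x : [0,T] → ℝ^d be continuous with finite p-variation ‖x‖_{p-var;[0,T]} < ∞. Let (λ^n)_{n≥1} be a sequence of strictly increasing bijections of [0,T] onto itself with sup_{t∈[0,T]} |λ^n(t) − t| → 0 as n → ∞. Then ‖x ∘ λ^n − x‖_{p'-var;[0,T]} → 0 as n → ∞. -/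
/-!
Composing with `λⁿ` does not increase `p`-variation, so the paths `x ∘ λⁿ − x` have uniformly
bounded `p`-variation; by uniform continuity of `x` they also tend to `0` uniformly. For `p < p'`
each increment satisfies `|Δ|^{p'} ≤ (osc)^{p'-p} |Δ|^p`, hence the `p'`-variation is at most
`(osc)^{p'-p}` times the bounded `p`-variation, and the oscillation tends to `0`.
-/

open scoped ENNReal

/-- The `p`-variation (norm) itself, i.e. the `1/p`-th power of `pVar`. -/
noncomputable def pVarNorm {E : Type*} [PseudoMetricSpace E] (p : ℝ) (x : ℝ → E) (a b : ℝ) :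
    ℝ≥0∞ :=
  pVar p x a b ^ (1 / p)

open Set Filter Topology

section PVar

variable {E : Type*} [PseudoMetricSpace E] {p : ℝ} {a b : ℝ}

lemma sum_le_pVar (x : ℝ → E) {n : ℕ} {t : Fin (n + 1) → ℝ} (ht : Monotone t) (h0 : t 0 = a)
    (hn : t (Fin.last n) = b) :
    ∑ i : Fin n, edist (x (t i.castSucc)) (x (t i.succ)) ^ p ≤ pVar p x a b :=
  le_iSup_of_le n <| le_iSup_of_le t <| le_iSup_of_le ht <| le_iSup_of_le h0 <|
    le_iSup_of_le hn le_rfl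

lemma pVar_le {x : ℝ → E} {C : ℝ≥0∞}
    (h : ∀ (n : ℕ) (t : Fin (n + 1) → ℝ), Monotone t → t 0 = a → t (Fin.last n) = b →
      ∑ i : Fin n, edist (x (t i.castSucc)) (x (t i.succ)) ^ p ≤ C) :
    pVar p x a b ≤ C :=
  iSup_le fun n => iSup_le fun t => iSup_le fun ht => iSup_le fun h0 => iSup_le fun hn =>
    h n t ht h0 hn

lemma mem_Icc_of_monotone {n : ℕ} {t : Fin (n + 1) → ℝ} (ht : Monotone t) (h0 : t 0 = a)
    (hn : t (Fin.last n) = b) (i : Fin (n + 1)) : t i ∈ Icc a b :=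
  ⟨h0 ▸ ht (Fin.zero_le i), hn ▸ ht (Fin.le_last i)⟩

lemma pVar_le_rpow_mul_pVar {p' : ℝ} (hp : 0 ≤ p) (hpp' : p ≤ p') {x : ℝ → E} {K : ℝ≥0∞}
    (hK : ∀ s ∈ Icc a b, ∀ u ∈ Icc a b, edist (x s) (x u) ≤ K) :
    pVar p' x a b ≤ K ^ (p' - p) * pVar p x a b := by
  refine pVar_le fun n t ht h0 hn => ?_
  have hmem := mem_Icc_of_monotone ht h0 hn
  calc ∑ i : Fin n, edist (x (t i.castSucc)) (x (t i.succ)) ^ p'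
      ≤ ∑ i : Fin n, K ^ (p' - p) * edist (x (t i.castSucc)) (x (t i.succ)) ^ p := by
        gcongr with i
        rw [← sub_add_cancel p' p, ENNReal.rpow_add_of_nonneg _ _ (sub_nonneg.2 hpp') hp,
          add_sub_cancel_right]
        gcongr
        exact hK _ (hmem _) _ (hmem _)
    _ ≤ K ^ (p' - p) * pVar p x a b := by
        rw [← Finset.mul_sum]
        gcongr
        exact sum_le_pVar x ht h0 hn

lemma pVar_comp_le_s6 (x : ℝ → E) {l : ℝ → ℝ} (hl : MonotoneOn l (Icc a b)) (ha : l a = a)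
    (hb : l b = b) :
    pVar p (fun t => x (l t)) a b ≤ pVar p x a b := by
  refine pVar_le fun n t ht h0 hn => ?_
  have hmem := mem_Icc_of_monotone ht h0 hn
  exact sum_le_pVar x (fun i j hij => hl (hmem i) (hmem j) (ht hij)) (by simp [h0, ha])
    (by simp [hn, hb])

end PVar

lemma pVar_sub_le {E : Type*} [SeminormedAddCommGroup E] {p : ℝ} (hp : 1 ≤ p) (f g : ℝ → E)
    (a b : ℝ) :
    pVar p (fun t => f t - g t) a b ≤ 2 ^ (p - 1) * (pVar p f a b + pVar p g a b) := by
  refine pVar_le fun n t ht h0 hn => ?_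
  calc ∑ i : Fin n, edist (f (t i.castSucc) - g (t i.castSucc)) (f (t i.succ) - g (t i.succ)) ^ p
      ≤ ∑ i : Fin n, 2 ^ (p - 1) * (edist (f (t i.castSucc)) (f (t i.succ)) ^ p
          + edist (g (t i.castSucc)) (g (t i.succ)) ^ p) := by
        gcongr with i
        refine le_trans ?_ (ENNReal.rpow_add_le_mul_rpow_add_rpow _ _ hp)
        gcongr
        simpa only [sub_eq_add_neg, edist_neg_neg] using
          edist_add_add_le (f (t i.castSucc)) (-g (t i.castSucc)) (f (t i.succ)) (-g (t i.succ))
    _ ≤ 2 ^ (p - 1) * (pVar p f a b + pVar p g a b) := by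
        rw [← Finset.mul_sum, Finset.sum_add_distrib]
        gcongr <;> exact sum_le_pVar _ ht h0 hn

lemma MonotoneOn.eq_endpoints_of_bijOn {l : ℝ → ℝ} {a b : ℝ} (hab : a ≤ b)
    (hl : MonotoneOn l (Icc a b)) (hbij : BijOn l (Icc a b) (Icc a b)) : l a = a ∧ l b = b := by
  have ha : a ∈ Icc a b := left_mem_Icc.2 hab
  have hb : b ∈ Icc a b := right_mem_Icc.2 hab
  obtain ⟨s, hs, hsa⟩ := hbij.surjOn ha
  obtain ⟨u, hu, hub⟩ := hbij.surjOn hb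
  have hla : l a ≤ l s := hl ha hs hs.1
  have hlb : l u ≤ l b := hl hu hb hu.2
  rw [hsa] at hla
  rw [hub] at hlb
  exact ⟨le_antisymm hla (hbij.mapsTo ha).1, le_antisymm (hbij.mapsTo hb).2 hlb⟩

lemma UniformContinuousOn.comp_tendstoUniformlyOn_id {α β ι : Type*} [UniformSpace α]
    [UniformSpace β] {x : α → β} {s : Set α} (hx : UniformContinuousOn x s) {F : Filter ι}
    {l : ι → α → α} (hmaps : ∀ n, MapsTo (l n) s s) (hl : TendstoUniformlyOn l id F s) :
    TendstoUniformlyOn (fun n t => x (l n t)) x F s := by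
  intro v hv
  have hv' := mem_inf_principal.1 (hx hv)
  filter_upwards [hl _ hv'] with n hn t ht
  exact hn t ht ⟨ht, hmaps n ht⟩

lemma tendsto_pVar_of_tendstoUniformlyOn_const {E ι : Type*} [PseudoMetricSpace E]
    {F : Filter ι} {f : ι → ℝ → E} {c : E} {p p' a b : ℝ} {C : ℝ≥0∞} (hp : 0 ≤ p)
    (hpp' : p < p') (hC : C ≠ ⊤) (hbound : ∀ n, pVar p (f n) a b ≤ C)
    (hf : TendstoUniformlyOn f (fun _ => c) F (Icc a b)) :
    Tendsto (fun n => pVar p' (f n) a b) F (𝓝 0) := by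
  have hg : Tendsto (fun K : ℝ≥0∞ => K ^ (p' - p) * C) (𝓝 0) (𝓝 0) := by
    have := ENNReal.Tendsto.mul_const ((ENNReal.continuous_rpow_const (y := p' - p)).tendsto 0)
      (Or.inr hC)
    rwa [ENNReal.zero_rpow_of_pos (sub_pos.2 hpp'), zero_mul] at this
  rw [ENNReal.nhds_zero_basis_Iic.tendsto_right_iff]
  intro ε hε
  obtain ⟨K, hK, hKε⟩ :=
    (ENNReal.nhds_zero_basis_Iic.tendsto_iff ENNReal.nhds_zero_basis_Iic).1 hg ε hε
  filter_upwards [EMetric.tendstoUniformlyOn_iff.1 hf (K / 2) (ENNReal.half_pos hK.ne')]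
    with n hn
  have hosc : ∀ s ∈ Icc a b, ∀ u ∈ Icc a b, edist (f n s) (f n u) ≤ K := fun s hs u hu =>
    calc edist (f n s) (f n u) ≤ edist c (f n s) + edist c (f n u) := edist_triangle_left _ _ _
      _ ≤ K / 2 + K / 2 := add_le_add (hn s hs).le (hn u hu).le
      _ = K := ENNReal.add_halves K
  exact (pVar_le_rpow_mul_pVar hp hpp'.le hosc).trans
    (le_trans (by gcongr; exact hbound n) (hKε K (mem_Iic.2 le_rfl)))

/-- Remark 3.2 of the paper: if `1 ≤ p < p'`, `x : [0,T] → ℝ^d` is continuous of finite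
`p`-variation and `(λⁿ)` are strictly increasing bijections of `[0,T]` with
`sup_t |λⁿ(t) − t| → 0`, then `‖x ∘ λⁿ − x‖_{p'-var;[0,T]} → 0`. -/
theorem pprime_var_convergence_of_reparam
    (d : ℕ) (p p' T : ℝ) (hp : 1 ≤ p) (hpp' : p < p') (hT : 0 < T)
    (x : ℝ → EuclideanSpace ℝ (Fin d))
    (hcont : ContinuousOn x (Set.Icc 0 T))
    (hfin : pVar p x 0 T ≠ ⊤)
    (l : ℕ → ℝ → ℝ)
    (hmono : ∀ n, StrictMonoOn (l n) (Set.Icc 0 T))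
    (hbij : ∀ n, Set.BijOn (l n) (Set.Icc 0 T) (Set.Icc 0 T))
    (hsup : ∀ ε > (0 : ℝ), ∃ N : ℕ, ∀ n ≥ N, ∀ t ∈ Set.Icc (0 : ℝ) T, |l n t - t| < ε) :
    Filter.Tendsto (fun n => pVarNorm p' (fun t => x (l n t) - x t) 0 T)
      Filter.atTop (nhds 0) := by
  have hl : TendstoUniformlyOn l id atTop (Icc 0 T) :=
    Metric.tendstoUniformlyOn_iff.2 fun ε hε => (eventually_atTop.2 (hsup ε hε)).mono
      fun n hn t ht => by simpa [Real.dist_eq, abs_sub_comm] using hn t ht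
  have hxl : TendstoUniformlyOn (fun n t => x (l n t)) x atTop (Icc 0 T) :=
    (isCompact_Icc.uniformContinuousOn_of_continuous hcont).comp_tendstoUniformlyOn_id
      (fun n => (hbij n).mapsTo) hl
  have hdiff : TendstoUniformlyOn (fun n t => x (l n t) - x t) (fun _ => 0) atTop (Icc 0 T) :=
    Metric.tendstoUniformlyOn_iff.2 fun ε hε => (Metric.tendstoUniformlyOn_iff.1 hxl ε hε).mono
      fun n hn t ht => by simpa [dist_eq_norm, norm_sub_rev] using hn t ht
  have hbound : ∀ n, pVar p (fun t => x (l n t) - x t) 0 T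
      ≤ 2 ^ (p - 1) * (pVar p x 0 T + pVar p x 0 T) := fun n => by
    obtain ⟨h0, hT'⟩ := (hmono n).monotoneOn.eq_endpoints_of_bijOn hT.le (hbij n)
    refine (pVar_sub_le hp _ x 0 T).trans ?_
    gcongr
    exact pVar_comp_le_s6 x (hmono n).monotoneOn h0 hT'
  have hC : 2 ^ (p - 1) * (pVar p x 0 T + pVar p x 0 T) ≠ ⊤ := by finiteness
  have hvar := tendsto_pVar_of_tendstoUniformlyOn_const (zero_le_one.trans hp) hpp' hC hbound hdiff
  have hnorm := ((ENNReal.continuous_rpow_const (y := 1 / p')).tendsto 0).comp hvar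
  rwa [ENNReal.zero_rpow_of_pos (one_div_pos.2 (by linarith))] at hnorm
end

section
/- Let p ≥ 1, T > 0, and let x : [0,T] → ℝ^d be continuous with finite p-variation. Say that a path z : [0,T] → ℝ^d has the Wiener property if for every ε > 0 there exists δ > 0 such that for every finite partition 0 = t_0 < t_1 < … < t_k = T with max_i (t_{i+1} − t_i) < δ one has Σ_i ‖z‖_{p-var;[t_i,t_{i+1}]}^p < ε. Let λ : [0,T] → [0,T] be a strictly increasing continuous bijection. Then x has the Wiener property if and only if x ∘ λ has the Wiener property. -/
open scoped ENNReal

/-- Wiener's property for a path `z` on `[0,T]`: for every `ε > 0` there is `δ > 0` such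
that for every finite partition `0 = t₀ < t₁ < … < t_k = T` of mesh `< δ`, the sum of the
`p`-th powers of the `p`-variations of `z` over the partition intervals is `< ε`. -/
def WienerProp {E : Type*} [PseudoMetricSpace E] (p T : ℝ) (z : ℝ → E) : Prop :=
  ∀ ε > (0 : ℝ), ∃ δ > (0 : ℝ), ∀ (k : ℕ) (t : Fin (k + 1) → ℝ),
    StrictMono t → t 0 = 0 → t (Fin.last k) = T →
    (∀ i : Fin k, t i.succ - t i.castSucc < δ) →
    ∑ i : Fin k, pVar p z (t i.castSucc) (t i.succ) < ENNReal.ofReal ε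

open Set Function

lemma Monotone.mem_Icc_of_endpoints {α : Type*} [Preorder α] {n : ℕ} {t : Fin (n + 1) → α}
    (ht : Monotone t) {a b : α} (h0 : t 0 = a) (hl : t (Fin.last n) = b) (i : Fin (n + 1)) :
    t i ∈ Icc a b :=
  ⟨h0 ▸ ht (Fin.zero_le i), hl ▸ ht (Fin.le_last i)⟩

lemma MonotoneOn.apply_endpoints_eq_of_surjOn {α : Type*} [PartialOrder α] {f : α → α} {a b : α}
    (hab : a ≤ b) (hf : MonotoneOn f (Icc a b)) (hmaps : MapsTo f (Icc a b) (Icc a b))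
    (hsurj : SurjOn f (Icc a b) (Icc a b)) : f a = a ∧ f b = b := by
  have ha : a ∈ Icc a b := left_mem_Icc.2 hab
  have hb : b ∈ Icc a b := right_mem_Icc.2 hab
  obtain ⟨u, hu, hfu⟩ := hsurj ha
  obtain ⟨v, hv, hfv⟩ := hsurj hb
  exact ⟨le_antisymm ((hf ha hu hu.1).trans_eq hfu) (hmaps ha).1,
    le_antisymm (hmaps hb).2 (hfv.symm.trans_le (hf hv hb hv.2))⟩

lemma StrictMonoOn.invFunOn_image {α β : Type*} [LinearOrder α] [Nonempty α] [Preorder β]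
    {f : α → β} {s : Set α} (hf : StrictMonoOn f s) : StrictMonoOn (invFunOn f s) (f '' s) := by
  rintro _ ⟨u, hu, rfl⟩ _ ⟨v, hv, rfl⟩ huv
  rwa [hf.injOn.leftInvOn_invFunOn hu, hf.injOn.leftInvOn_invFunOn hv, ← hf.lt_iff_lt hu hv]

lemma IsCompact.continuousOn_invFunOn {X Y : Type*} [TopologicalSpace X] [Nonempty X]
    [TopologicalSpace Y] [T2Space Y] {f : X → Y} {s : Set X} (hs : IsCompact s)
    (hf : ContinuousOn f s) (hinj : InjOn f s) : ContinuousOn (invFunOn f s) (f '' s) := by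
  refine continuousOn_iff_isClosed.2 fun C hC => ⟨f '' (s ∩ C), ?_, ?_⟩
  · exact ((hs.inter_right hC).image_of_continuousOn (hf.mono inter_subset_left)).isClosed
  · ext y
    constructor
    · rintro ⟨hy, ⟨x, hx, rfl⟩⟩
      rw [mem_preimage, hinj.leftInvOn_invFunOn hx] at hy
      exact ⟨⟨x, ⟨hx, hy⟩, rfl⟩, x, hx, rfl⟩
    · rintro ⟨⟨x, ⟨hx, hxC⟩, rfl⟩, -⟩
      exact ⟨by rwa [mem_preimage, hinj.leftInvOn_invFunOn hx], x, hx, rfl⟩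

section PVar

variable {E : Type*} [PseudoMetricSpace E] {p : ℝ}

lemma pVar_le_of_eqOn_comp {z w : ℝ → E} {lam : ℝ → ℝ} {a b : ℝ}
    (hlam : MonotoneOn lam (Icc a b)) (hzw : EqOn z (w ∘ lam) (Icc a b)) :
    pVar p z a b ≤ pVar p w (lam a) (lam b) := by
  refine iSup_le fun n => iSup_le fun t => iSup_le fun ht => iSup_le fun h0 => iSup_le fun hl => ?_
  have hmem := ht.mem_Icc_of_endpoints h0 hl
  have hlt : Monotone (lam ∘ t) := fun i j hij => hlam (hmem i) (hmem j) (ht hij)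
  calc ∑ i : Fin n, edist (z (t i.castSucc)) (z (t i.succ)) ^ p
      = ∑ i : Fin n, edist (w ((lam ∘ t) i.castSucc)) (w ((lam ∘ t) i.succ)) ^ p := by
        simp only [hzw (hmem _), comp_apply]
    _ ≤ pVar p w (lam a) (lam b) :=
        le_iSup_of_le n <| le_iSup_of_le (lam ∘ t) <| le_iSup_of_le hlt <|
          le_iSup_of_le (by simp [h0]) <| le_iSup_of_le (by simp [hl]) le_rfl

/-- Uniform continuity of `lam` on the compact interval `[0,T]` turns partitions of small mesh
into partitions of small mesh. -/
theorem WienerProp.of_eqOn_comp {T : ℝ} {z w : ℝ → E} {lam : ℝ → ℝ} (hw : WienerProp p T w)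
    (hmono : StrictMonoOn lam (Icc 0 T)) (hcont : ContinuousOn lam (Icc 0 T))
    (h0 : lam 0 = 0) (hT : lam T = T) (hzw : EqOn z (w ∘ lam) (Icc 0 T)) :
    WienerProp p T z := by
  intro ε hε
  obtain ⟨δ, hδ, hwδ⟩ := hw ε hε
  obtain ⟨δ', hδ', hlamδ⟩ := Metric.uniformContinuousOn_iff.1
    (isCompact_Icc.uniformContinuousOn_of_continuous hcont) δ hδ
  refine ⟨δ', hδ', fun k t ht ht0 htT hmesh => ?_⟩
  have hmem := ht.monotone.mem_Icc_of_endpoints ht0 htT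
  have hlamt : StrictMono (lam ∘ t) := fun i j hij => hmono (hmem i) (hmem j) (ht hij)
  have hmesh' (i : Fin k) : lam (t i.succ) - lam (t i.castSucc) < δ := by
    refine (le_abs_self _).trans_lt ?_
    rw [← Real.dist_eq]
    refine hlamδ _ (hmem _) _ (hmem _) ?_
    rw [Real.dist_eq, abs_of_pos (sub_pos.2 (ht i.castSucc_lt_succ))]
    exact hmesh i
  calc ∑ i : Fin k, pVar p z (t i.castSucc) (t i.succ)
      ≤ ∑ i : Fin k, pVar p w ((lam ∘ t) i.castSucc) ((lam ∘ t) i.succ) := by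
        refine Finset.sum_le_sum fun i _ => pVar_le_of_eqOn_comp ?_ ?_
        · exact hmono.monotoneOn.mono (Icc_subset_Icc (hmem _).1 (hmem _).2)
        · exact hzw.mono (Icc_subset_Icc (hmem _).1 (hmem _).2)
    _ < ENNReal.ofReal ε :=
        hwδ k (lam ∘ t) hlamt (by simp [ht0, h0]) (by simp [htT, hT]) hmesh'

end PVar

theorem wienerProp_reparam_iff_general
    (d : ℕ) (p T : ℝ) (hT : 0 < T)
    (x : ℝ → EuclideanSpace ℝ (Fin d))
    (lam : ℝ → ℝ)
    (hmono : StrictMonoOn lam (Set.Icc 0 T))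
    (hlcont : ContinuousOn lam (Set.Icc 0 T))
    (hbij : Set.BijOn lam (Set.Icc 0 T) (Set.Icc 0 T)) :
    WienerProp p T x ↔ WienerProp p T (x ∘ lam) := by
  obtain ⟨hlam0, hlamT⟩ := hmono.monotoneOn.apply_endpoints_eq_of_surjOn hT.le hbij.mapsTo
    hbij.surjOn
  set g := invFunOn lam (Icc 0 T)
  have himage : lam '' Icc 0 T = Icc 0 T := hbij.image_eq
  have hinv : InvOn g lam (Icc 0 T) (Icc 0 T) := hbij.invOn_invFunOn
  have hgbij : BijOn g (Icc 0 T) (Icc 0 T) := 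
    hinv.symm.bijOn hbij.surjOn.mapsTo_invFunOn hbij.mapsTo
  have hgmono : StrictMonoOn g (Icc 0 T) := himage ▸ hmono.invFunOn_image
  have hgcont : ContinuousOn g (Icc 0 T) :=
    himage ▸ IsCompact.continuousOn_invFunOn isCompact_Icc hlcont hbij.injOn
  obtain ⟨hg0, hgT⟩ := hgmono.monotoneOn.apply_endpoints_eq_of_surjOn hT.le hgbij.mapsTo
    hgbij.surjOn
  exact ⟨fun hx => hx.of_eqOn_comp hmono hlcont hlam0 hlamT fun _ _ => rfl,
    fun hxlam => hxlam.of_eqOn_comp hgmono hgcont hg0 hgT fun s hs => by simp [hinv.2 hs]⟩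

/-- Key step in the proof of Proposition 3.3(iv) of the paper: the Wiener property is
invariant under reparametrization by a strictly increasing continuous bijection of
`[0,T]`. -/
theorem wienerProp_reparam_iff
    (d : ℕ) (p T : ℝ) (hp : 1 ≤ p) (hT : 0 < T)
    (x : ℝ → EuclideanSpace ℝ (Fin d))
    (hcont : ContinuousOn x (Set.Icc 0 T))
    (hfin : pVar p x 0 T ≠ ⊤)
    (lam : ℝ → ℝ)
    (hmono : StrictMonoOn lam (Set.Icc 0 T))
    (hlcont : ContinuousOn lam (Set.Icc 0 T))
    (hbij : Set.BijOn lam (Set.Icc 0 T) (Set.Icc 0 T)) :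
    WienerProp p T x ↔ WienerProp p T (x ∘ lam) :=
  wienerProp_reparam_iff_general d p T hT x lam hmono hlcont hbij
end
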